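/- Let P, Q ∈ SYT(r×c), n = rc, S = stack(P,Q), and let λ(x,y) for 0 ≤ x, y ≤ n (Cartesian coordinates) denote the (n+1)×(n+1) northeast block of partitions of PEdiagram(S) (the block whose unit-square decorations form PM(S)^NE). Then for all 0 ≤ x, y ≤ n, λ(x,y) = λ(x,0) +′ λ(0,y), where +′ denotes the vertical sum of partitions. -/

import Mathlib

namespace PromRS

/-! ## Rectangular standard Young tableaux (as functions; 0-indexed cells; entries 1..R*C) -/

/-- `T` is a standard Young tableau of rectangular shape with `R` rows and `C` columns:
rows and columns strictly increase, and the entries on the `R × C` rectangle are a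
bijection onto `{1, …, R*C}`. -/
def IsSYT (R C : ℕ) (T : ℕ → ℕ → ℕ) : Prop :=
  (∀ i j, i < R → j + 1 < C → T i j < T i (j + 1)) ∧
  (∀ i j, i + 1 < R → j < C → T i j < T (i + 1) j) ∧
  Set.BijOn (fun p : ℕ × ℕ => T p.1 p.2) {p : ℕ × ℕ | p.1 < R ∧ p.2 < C} (Set.Icc 1 (R * C))

/-- Stacking: add `r*c` to every entry of `Q` and place the result below `P`. -/
def stack (r c : ℕ) (P Q : ℕ → ℕ → ℕ) : ℕ → ℕ → ℕ := fun i j =>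
  if i < r then P i j else Q (i - r) j + r * c

/-! ## Gromotion and promotion permutations -/

/-- Value of `T` at a cell, with `⊤` outside the `R × C` rectangle. -/
def ext (R C : ℕ) (T : ℕ → ℕ → ℕ) (p : ℕ × ℕ) : WithTop ℕ :=
  if p.1 < R ∧ p.2 < C then ((T p.1 p.2 : ℕ) : WithTop ℕ) else ⊤

/-- The jeu de taquin slide moves the empty cell to the smaller of its east/south neighbors. -/
def nextCell (R C : ℕ) (T : ℕ → ℕ → ℕ) (p : ℕ × ℕ) : ℕ × ℕ :=
  if ext R C T (p.1, p.2 + 1) < ext R C T (p.1 + 1, p.2) then (p.1, p.2 + 1)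
  else (p.1 + 1, p.2)

/-- The sliding path of the empty cell, starting at the top-left corner. -/
def slidePath (R C : ℕ) (T : ℕ → ℕ → ℕ) : ℕ → ℕ × ℕ
  | 0 => (0, 0)
  | k + 1 => nextCell R C T (slidePath R C T k)

def maxEntry (R C : ℕ) (T : ℕ → ℕ → ℕ) : ℕ :=
  ((Finset.range R) ×ˢ (Finset.range C)).sup fun p => T p.1 p.2

/-- Gromotion: delete the minimal entry (at the top-left corner), rectify by jeu de taquin
slides, and fill the vacated outer corner with (current maximum) + 1; entries are not
decremented. -/
def gromotion (R C : ℕ) (T : ℕ → ℕ → ℕ) : ℕ → ℕ → ℕ := fun i j =>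
  if i = R - 1 ∧ j = C - 1 then maxEntry R C T + 1
  else
    match (List.range (R + C - 2)).find? (fun k => decide (slidePath R C T k = (i, j))) with
    | some k => T (slidePath R C T (k + 1)).1 (slidePath R C T (k + 1)).2
    | none => T i j

/-- The entry that slides (up) into row `i` (1-indexed) during one gromotion slide of `T`:
the value of `T` at the first cell of the sliding path lying in 0-indexed row `i`. -/
def slideInto (R C : ℕ) (T : ℕ → ℕ → ℕ) (i : ℕ) : ℕ :=
  match (List.range (R + C - 1)).find? (fun k => decide ((slidePath R C T k).1 = i)) with
  | some k => T (slidePath R C T k).1 (slidePath R C T k).2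
  | none => 0

/-- The `i`-th promotion permutation of `T ∈ SYT(R × C)`: its value at `j` is the entry
that slides into row `i` when computing `gromotion^j(T)`, taken modulo `R*C` with
residues in `{1, …, R*C}`. -/
def promPerm (R C : ℕ) (T : ℕ → ℕ → ℕ) (i : ℕ) : ℕ → ℕ := fun j =>
  (slideInto R C ((gromotion R C)^[j - 1] T) i - 1) % (R * C) + 1

/-! ## Tableaux as lists of rows, Robinson–Schensted insertion -/

/-- Entry of a list-of-rows tableau (0-indexed; `0` outside). -/
def entryL (T : List (List ℕ)) (i j : ℕ) : ℕ := (T.getD i []).getD j 0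

/-- Convert a function tableau on an `R × C` rectangle to a list of rows. -/
def toListT (R C : ℕ) (T : ℕ → ℕ → ℕ) : List (List ℕ) :=
  (List.range R).map fun i => (List.range C).map fun j => T i j

/-- Transpose (conjugate) of a list-of-rows tableau. -/
def transposeT (T : List (List ℕ)) : List (List ℕ) :=
  (List.range (T.getD 0 []).length).map fun j => T.filterMap fun row => row[j]?

/-- Shape (row lengths) of a list-of-rows tableau. -/
def shapeL (T : List (List ℕ)) : List ℕ := T.map List.length

/-- Standard Young tableau, as a list of rows: weakly decreasing nonempty row lengths,
rows and columns strictly increasing, and entries exactly `{1, …, N}` where `N` is the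
number of cells. -/
def IsSYTList (T : List (List ℕ)) : Prop :=
  (∀ i, i + 1 < T.length → (T.getD (i + 1) []).length ≤ (T.getD i []).length) ∧
  (∀ row ∈ T, row ≠ []) ∧
  (∀ i j, i < T.length → j + 1 < (T.getD i []).length → entryL T i j < entryL T i (j + 1)) ∧
  (∀ i j, i + 1 < T.length → j < (T.getD (i + 1) []).length →
    entryL T i j < entryL T (i + 1) j) ∧
  T.flatten.Nodup ∧ (∀ m, m ∈ T.flatten ↔ 1 ≤ m ∧ m ≤ T.flatten.length)

/-- Schensted row insertion of `x` into a tableau. -/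
def rowInsert : List (List ℕ) → ℕ → List (List ℕ)
  | [], x => [[x]]
  | r :: rs, x =>
    match r.dropWhile (fun y => decide (y < x)) with
    | [] => (r ++ [x]) :: rs
    | y :: bs => (r.takeWhile (fun y => decide (y < x)) ++ x :: bs) :: rowInsert rs y

/-- The (0-indexed) row where the shape grew when passing from `P` to `P'`. -/
def rowOfNewCell (P P' : List (List ℕ)) : ℕ :=
  ((List.range P'.length).find? fun i =>
    decide ((P'.getD i []).length ≠ (P.getD i []).length)).getD 0

def placeInRow (Q : List (List ℕ)) (r k : ℕ) : List (List ℕ) :=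
  if r < Q.length then Q.set r (Q.getD r [] ++ [k]) else Q ++ [[k]]

/-- The Robinson–Schensted correspondence: the pair (insertion tableau, recording tableau)
of a word. -/
def RS (w : List ℕ) : List (List ℕ) × List (List ℕ) :=
  (List.range w.length).foldl
    (fun PQ i =>
      let P' := rowInsert PQ.1 (w.getD i 0)
      (P', placeInRow PQ.2 (rowOfNewCell PQ.1 P') (i + 1)))
    ([], [])

/-! ## Jeu de taquin on list tableaux; evacuation -/

def extL (T : List (List ℕ)) (p : ℕ × ℕ) : WithTop ℕ :=
  if p.2 < (T.getD p.1 []).length then ((entryL T p.1 p.2 : ℕ) : WithTop ℕ) else ⊤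

def nextCellL (T : List (List ℕ)) (p : ℕ × ℕ) : ℕ × ℕ :=
  if extL T (p.1, p.2 + 1) = ⊤ ∧ extL T (p.1 + 1, p.2) = ⊤ then p
  else if extL T (p.1, p.2 + 1) < extL T (p.1 + 1, p.2) then (p.1, p.2 + 1)
  else (p.1 + 1, p.2)

def jdtPath (T : List (List ℕ)) : ℕ → ℕ × ℕ
  | 0 => (0, 0)
  | k + 1 => nextCellL T (jdtPath T k)

/-- The outer corner vacated when the minimal entry of `T` is deleted and the tableau is
rectified by jeu de taquin slides. -/
def vacated (T : List (List ℕ)) : ℕ × ℕ := jdtPath T T.flatten.length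

/-- The value at cell `(i, j)` after the rectification slide. -/
def slidValue (T : List (List ℕ)) (i j : ℕ) : ℕ :=
  match (List.range T.flatten.length).find? (fun k =>
      decide (jdtPath T k = (i, j) ∧ jdtPath T (k + 1) ≠ (i, j))) with
  | some k => entryL T (jdtPath T (k + 1)).1 (jdtPath T (k + 1)).2
  | none => entryL T i j

/-- Delete the minimal entry of `T` and rectify. -/
def delta (T : List (List ℕ)) : List (List ℕ) :=
  ((List.range T.length).map fun i =>
    (List.range ((T.getD i []).length - if i = (vacated T).1 then 1 else 0)).map fun j =>
      slidValue T i j).filter fun row => decide (row ≠ [])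

/-- The entry of the evacuation `∂T` at cell `(i,j)`: `n + 1 - k` where the `k`-th
deletion-rectification vacates `(i,j)`. -/
def evacEntry (T : List (List ℕ)) (i j : ℕ) : ℕ :=
  match (List.range T.flatten.length).find? (fun k =>
      decide (vacated (delta^[k] T) = (i, j))) with
  | some k => T.flatten.length - k
  | none => 0

/-- Schützenberger evacuation `∂T` of a standard Young tableau. -/
def evacL (T : List (List ℕ)) : List (List ℕ) :=
  (List.range T.length).map fun i =>
    (List.range (T.getD i []).length).map fun j => evacEntry T i j

/-! ## Shadow lines, skeleta, and Viennot's construction -/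

def dirNE (a b : ℤ × ℤ) : Prop := a.1 ≤ b.1 ∧ a.2 ≤ b.2
def dirSE (a b : ℤ × ℤ) : Prop := a.1 ≤ b.1 ∧ b.2 ≤ a.2
def dirSW (a b : ℤ × ℤ) : Prop := b.1 ≤ a.1 ∧ b.2 ≤ a.2
def dirNW (a b : ℤ × ℤ) : Prop := b.1 ≤ a.1 ∧ a.2 ≤ b.2

def minimalsUnder (d : ℤ × ℤ → ℤ × ℤ → Prop) (P : Set (ℤ × ℤ)) : Set (ℤ × ℤ) :=
  {p ∈ P | ∀ q ∈ P, d q p → q = p}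

/-- `P` minus its first `j` shadow lines. -/
def shadowRest (d : ℤ × ℤ → ℤ × ℤ → Prop) (P : Set (ℤ × ℤ)) : ℕ → Set (ℤ × ℤ)
  | 0 => P
  | j + 1 => shadowRest d P j \ minimalsUnder d (shadowRest d P j)

/-- The `j`-th shadow line of `P` (1-indexed `j`). -/
def shadowLine (d : ℤ × ℤ → ℤ × ℤ → Prop) (P : Set (ℤ × ℤ)) (j : ℕ) : Set (ℤ × ℤ) :=
  minimalsUnder d (shadowRest d P (j - 1))

/-- The skeleton of a single shadow line `L`: the minimal elements of the set of points
covered by the shadows of at least two points of `L`. -/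
def lineSkeleton (d : ℤ × ℤ → ℤ × ℤ → Prop) (L : Set (ℤ × ℤ)) : Set (ℤ × ℤ) :=
  minimalsUnder d {x | ∃ p ∈ L, ∃ q ∈ L, p ≠ q ∧ d p x ∧ d q x}

/-- The skeleton of `P`: the union of the skeleta of its shadow lines. -/
def skeleton (d : ℤ × ℤ → ℤ × ℤ → Prop) (P : Set (ℤ × ℤ)) : Set (ℤ × ℤ) :=
  ⋃ j : ℕ, lineSkeleton d (shadowLine d P (j + 1))

/-- The `k`-th iterated skeleton of `P`. -/
def skeletonIter (d : ℤ × ℤ → ℤ × ℤ → Prop) (P : Set (ℤ × ℤ)) (k : ℕ) : Set (ℤ × ℤ) :=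
  (skeleton d)^[k] P

def IsMinSnd (L : Set (ℤ × ℤ)) (y : ℤ) : Prop := (∃ p ∈ L, p.2 = y) ∧ ∀ p ∈ L, y ≤ p.2
def IsMaxSnd (L : Set (ℤ × ℤ)) (y : ℤ) : Prop := (∃ p ∈ L, p.2 = y) ∧ ∀ p ∈ L, p.2 ≤ y
def IsMinFst (L : Set (ℤ × ℤ)) (x : ℤ) : Prop := (∃ p ∈ L, p.1 = x) ∧ ∀ p ∈ L, x ≤ p.1
def IsMaxFst (L : Set (ℤ × ℤ)) (x : ℤ) : Prop := (∃ p ∈ L, p.1 = x) ∧ ∀ p ∈ L, p.1 ≤ x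

/-- The set of exit coordinates (specified by `spec`) of the shadow lines of the `i`-th
iterated skeleton of `P` in direction `d`. -/
def exitSet (spec : Set (ℤ × ℤ) → ℤ → Prop) (d : ℤ × ℤ → ℤ × ℤ → Prop)
    (P : Set (ℤ × ℤ)) (i : ℕ) : Set ℤ :=
  {v | ∃ j : ℕ, spec (shadowLine d (skeletonIter d P i) (j + 1)) v}

/-- The word read off along one edge in Viennot's construction is the lattice word of the
standard tableau `T`: there is an enumeration `e` of all shadow-line exit coordinates,
in the order prescribed by `lt`, such that the `m`-th exit belongs to a shadow line of the
`i`-th iterated skeleton exactly when the entry `m` of `T` lies in row `i + 1`. -/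
def ReadsWord (spec : Set (ℤ × ℤ) → ℤ → Prop) (lt : ℤ → ℤ → Prop)
    (d : ℤ × ℤ → ℤ × ℤ → Prop) (P : Set (ℤ × ℤ)) (T : List (List ℕ)) : Prop :=
  ∃ e : Fin T.flatten.length → ℤ,
    (∀ a b : Fin T.flatten.length, a < b → lt (e a) (e b)) ∧
    (Set.range e = ⋃ i : ℕ, exitSet spec d P i) ∧
    ∀ (m : Fin T.flatten.length) (i : ℕ), e m ∈ exitSet spec d P i →
      (T.findIdx fun row => row.contains (m.1 + 1)) + 1 = i + 1

/-- `𝒱(𝒫, ↗) = (Pt, Qt)`: the P-word is read bottom-to-top along the right edge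
(east exit heights, which are the minimal `y`-coordinates of the lines), the Q-word
left-to-right along the top edge (north exits at minimal `x`-coordinates). -/
def ViennotNE (P : Set (ℤ × ℤ)) (Pt Qt : List (List ℕ)) : Prop :=
  ReadsWord IsMinSnd (· < ·) dirNE P Pt ∧ ReadsWord IsMinFst (· < ·) dirNE P Qt

/-- `𝒱(𝒫, ↘) = (Pt, Qt)`: P-word left-to-right along the bottom edge, Q-word
top-to-bottom along the right edge. -/
def ViennotSE (P : Set (ℤ × ℤ)) (Pt Qt : List (List ℕ)) : Prop :=
  ReadsWord IsMinFst (· < ·) dirSE P Pt ∧ ReadsWord IsMaxSnd (· > ·) dirSE P Qt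

/-- `𝒱(𝒫, ↙) = (Pt, Qt)`: P-word bottom-to-top along the left edge, Q-word
right-to-left along the bottom edge. -/
def ViennotSW (P : Set (ℤ × ℤ)) (Pt Qt : List (List ℕ)) : Prop :=
  ReadsWord IsMaxSnd (· < ·) dirSW P Pt ∧ ReadsWord IsMaxFst (· > ·) dirSW P Qt

/-- `𝒱(𝒫, ↖) = (Pt, Qt)`: P-word right-to-left along the top edge, Q-word
bottom-to-top along the left edge. -/
def ViennotNW (P : Set (ℤ × ℤ)) (Pt Qt : List (List ℕ)) : Prop :=
  ReadsWord IsMaxFst (· > ·) dirNW P Pt ∧ ReadsWord IsMinSnd (· < ·) dirNW P Qt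

/-- The point set `𝒫^NE(ρ)` of the northeast `n × n` block of the permutation matrix of
`ρ ∈ S_{2n}`, in Cartesian coordinates. -/
def pointsNE (n : ℕ) (f : ℕ → ℕ) : Set (ℤ × ℤ) :=
  {p | ∃ x : ℕ, 1 ≤ x ∧ x ≤ n ∧ n < f x ∧ p = ((f x : ℤ) - n, (n : ℤ) + 1 - x)}

/-! ## Crossings and nestings of perfect matchings -/

/-- The matching `{a, f a}` on `{1, …, N}` has a `k`-crossing:
blocks `{a₁ < b₁}, …, {a_k < b_k}` with `a₁ < ⋯ < a_k < b₁ < ⋯ < b_k`. -/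
def HasCrossing (f : ℕ → ℕ) (N k : ℕ) : Prop :=
  ∃ a b : Fin k → ℕ, StrictMono a ∧ StrictMono b ∧
    (∀ m, 1 ≤ a m ∧ b m ≤ N ∧ f (a m) = b m ∧ a m < b m) ∧
    ∀ m m' : Fin k, a m < b m'

/-- The matching `{a, f a}` on `{1, …, N}` has a `k`-nesting:
blocks `{a₁ < b₁}, …, {a_k < b_k}` with `a₁ < ⋯ < a_k < b_k < ⋯ < b₁`. -/
def HasNesting (f : ℕ → ℕ) (N k : ℕ) : Prop :=
  ∃ a b : Fin k → ℕ, StrictMono a ∧ StrictAnti b ∧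
    (∀ m, 1 ≤ a m ∧ b m ≤ N ∧ f (a m) = b m ∧ a m < b m) ∧
    ∀ m m' : Fin k, a m < b m'

/-! ## Local rules, the promotion–evacuation diagram, and the promotion matrix -/

/-- Partitions are encoded as lists of row lengths (fixed length, padded by zeros). -/
def sortDesc (l : List ℕ) : List ℕ := List.insertionSort (· ≥ ·) l

/-- The sequence `ν + κ - λ` (pointwise). -/
def ruleSeq (lam nu ka : List ℕ) : List ℕ :=
  List.zipWith (fun a b => a - b) (List.zipWith (· + ·) nu ka) lam

/-- The local rule: `μ = sort(ν + κ - λ)`. -/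
def localRule (lam nu ka : List ℕ) : List ℕ := sortDesc (ruleSeq lam nu ka)

/-- The decoration of a local rule square: `i` if `ν + κ - λ` fails to be sorted at rows
`i, i+1` (1-indexed), and `0` if no decoration is present. -/
def decoration (lam nu ka : List ℕ) : ℕ :=
  match (List.range (ruleSeq lam nu ka).length).find? (fun i =>
      decide ((ruleSeq lam nu ka).getD i 0 < (ruleSeq lam nu ka).getD (i + 1) 0)) with
  | some i => i + 1
  | none => 0

/-- Fill in the next row of the promotion–evacuation diagram from the previous row `prev`:
the new row starts with the empty partition at position `s` and continues by local rules. -/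
def nextRow (R : ℕ) (prev : ℕ → List ℕ) (s : ℕ) : ℕ → List ℕ
  | 0 => List.replicate R 0
  | x + 1 =>
    if x + 1 ≤ s then List.replicate R 0
    else localRule (prev x) (prev (x + 1)) (nextRow R prev s x)

/-- The `j`-th row of the promotion–evacuation diagram of `T ∈ SYT(R × C)`, as a function
of the column index (row `0` is the chain of `T`). -/
def PErow (R C : ℕ) (T : ℕ → ℕ → ℕ) : ℕ → ℕ → List ℕ
  | 0 => fun x => (List.range R).map fun i =>
      ((Finset.range C).filter fun j => T i j ≤ min x (R * C)).card
  | j + 1 => nextRow R (PErow R C T j) (j + 1)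

/-- For `S = stack(P, Q) ∈ SYT(2r × c)` and `n = r*c`, the `(n+1) × (n+1)` northeast block
of partitions `λ(x, y)` of `PEdiagram(S)` (Cartesian coordinates): `λ(x,y)` is the
diagram entry in row `n - y`, column `n + x`. -/
def lamBlock (r c : ℕ) (S : ℕ → ℕ → ℕ) (x y : ℕ) : List ℕ :=
  PErow (2 * r) c S (r * c - y) (r * c + x)

/-- The entry of `PM(S)^NE` at Cartesian coordinates `(x, y)`, `1 ≤ x, y ≤ n`: the
decoration of the local rule square with corners `λ(x-1, y-1)`, `λ(x-1, y)`, `λ(x, y-1)`,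
`λ(x, y)`. -/
def PMNE (r c : ℕ) (S : ℕ → ℕ → ℕ) (x y : ℕ) : ℕ :=
  decoration (lamBlock r c S (x - 1) y) (lamBlock r c S x y) (lamBlock r c S (x - 1) (y - 1))

/-- Chain of partitions of a list tableau: shape of the entries `≤ m`. -/
def chainOfL (T : List (List ℕ)) (m : ℕ) : List ℕ :=
  T.map fun row => (row.filter fun a => decide (a ≤ m)).length

/-- Column height `#{i : j < l i}` of a partition. -/
def colHeight (l : List ℕ) (j : ℕ) : ℕ := (l.filter fun a => decide (j < a)).length

/-- Vertical sum `l +' m` of two partitions (stack the columns of `m` onto those of `l`),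
computed inside a `rows × cols` bounding box. -/
def vsum (rows cols : ℕ) (l m : List ℕ) : List ℕ :=
  (List.range rows).map fun i =>
    ((List.range cols).filter fun j => decide (i < colHeight l j + colHeight m j)).length

/-! ## The point sets `S_k` and `S_{kj}` -/

/-- `x_{sj}`: the entry of `Q` in row `s`, column `j` (1-indexed). -/
def xEnt (Q : ℕ → ℕ → ℕ) (s j : ℕ) : ℤ := (Q (s - 1) (j - 1) : ℤ)

/-- `y_{tj}`: the entry of `∂(P)` in row `t`, column `j` (1-indexed). -/
def yEnt (r c : ℕ) (P : ℕ → ℕ → ℕ) (t j : ℕ) : ℤ :=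
  (entryL (evacL (toListT r c P)) (t - 1) (j - 1) : ℤ)

def Skj (r c : ℕ) (P Q : ℕ → ℕ → ℕ) (k j : ℕ) : Set (ℤ × ℤ) :=
  {p | ∃ s t : ℕ, 1 ≤ s ∧ s ≤ r ∧ 1 ≤ t ∧ t ≤ r ∧ s + t - 1 = k ∧
    p = (xEnt Q s j, yEnt r c P t j)}

def Sk (r c : ℕ) (P Q : ℕ → ℕ → ℕ) (k : ℕ) : Set (ℤ × ℤ) :=
  ⋃ j ∈ Set.Icc 1 c, Skj r c P Q k j

/-- A southeast chain of `k` ones in the matrix `U` (rows increase, columns increase),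
contained in a rectangle that fully fits into the strictly upper triangular part of the
`N × N` matrix. -/
def HasSEChain (U : ℕ → ℕ → ℕ) (N k : ℕ) : Prop :=
  ∃ a b : Fin k → ℕ, StrictMono a ∧ StrictMono b ∧ (∀ m, U (a m) (b m) = 1) ∧
    ∃ r₁ r₂ c₁ c₂ : ℕ, 1 ≤ r₁ ∧ r₂ < c₁ ∧ c₂ ≤ N ∧
      ∀ m, r₁ ≤ a m ∧ a m ≤ r₂ ∧ c₁ ≤ b m ∧ b m ≤ c₂

/-- A southwest chain of `k` ones in the matrix `U` (rows increase, columns decrease),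
contained in a rectangle that fully fits into the strictly upper triangular part of the
`N × N` matrix. -/
def HasSWChain (U : ℕ → ℕ → ℕ) (N k : ℕ) : Prop :=
  ∃ a b : Fin k → ℕ, StrictMono a ∧ StrictAnti b ∧ (∀ m, U (a m) (b m) = 1) ∧
    ∃ r₁ r₂ c₁ c₂ : ℕ, 1 ≤ r₁ ∧ r₂ < c₁ ∧ c₂ ≤ N ∧
      ∀ m, r₁ ≤ a m ∧ a m ≤ r₂ ∧ c₁ ≤ b m ∧ b m ≤ c₂

/-!
Encode a partition in the `2r × c` box by its column heights, so that `+′` adds column heights.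
In these coordinates the local rule is additive: if `q → q'` and `a → a'` each add one cell, the
local rule applied to `q +′ a`, `q +′ a'`, `q' +′ a'` returns `q' +′ a` (`localRule_vsum`). The
local rule also keeps every row of the diagram a chain of partitions growing one cell at a time,
one cell below the row above it (`localRule_addsCell`). The top edge of the block is the chain of
`S` from `n` to `2n`: the chain `Q_x = shapeUpTo r c Q x` of `Q` stacked below the full `r × c`
rectangle `λ(0, n)`, so `λ(x, n) = Q_x +′ λ(0, n)`. Filling the block by local rules, left to
right and top to bottom, gives `λ(x, y) = Q_x +′ λ(0, y)` everywhere; as `λ(0, 0) = ∅`, this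
identifies `λ(x, 0)` with `Q_x`.
-/

open Finset

structure IsPartitionIn (R c : ℕ) (l : List ℕ) : Prop where
  length_eq : l.length = R
  sortedGE : l.SortedGE
  le_of_mem : ∀ a ∈ l, a ≤ c

def AddsCell (l m : List ℕ) : Prop := ∃ i < l.length, m = l.modify i (· + 1)

theorem antitone_getD_of_sortedGE {l : List ℕ} (h : l.SortedGE) :
    Antitone fun i => l.getD i 0 := by
  intro i i' hii'
  dsimp only
  rcases lt_or_ge i' l.length with hi' | hi'
  · simp only [List.getD_eq_getElem _ _ hi', List.getD_eq_getElem _ _ (hii'.trans_lt hi')]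
    exact h.getElem_ge_getElem_of_le hii'
  · rw [List.getD_eq_default _ _ hi']
    exact Nat.zero_le _

theorem sortedGE_map_range {R : ℕ} {f : ℕ → ℕ} (hf : AntitoneOn f (Set.Iio R)) :
    ((List.range R).map f).SortedGE :=
  List.sortedGE_of_getElem_ge_getElem_of_le fun _ _ hi _ h => by
    simp only [List.getElem_map, List.getElem_range]
    exact hf (h.trans_lt (by simpa using hi)) (by simpa using hi) h

theorem map_range_getD (l : List ℕ) : (List.range l.length).map (l.getD · 0) = l :=
  List.ext_getElem (by simp) fun i _ h => by
    rw [List.getElem_map, List.getElem_range, List.getD_eq_getElem _ _ h]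

theorem length_filter_range (n : ℕ) (p : ℕ → Prop) [DecidablePred p] :
    ((List.range n).filter fun k => decide (p k)).length = #{k ∈ range n | p k} := by
  rw [← List.countP_eq_length_filter, ← Multiset.coe_countP, Multiset.countP_eq_card_filter]
  rfl

theorem lt_card_filter_range_iff {p : ℕ → Prop} [DecidablePred p]
    {n : ℕ} (hp : ∀ ⦃k k'⦄, k ≤ k' → k' < n → p k' → p k) {s : ℕ} :
    s < #{k ∈ range n | p k} ↔ s < n ∧ p s := by
  constructor
  · intro h
    by_contra hs
    have hsub : {k ∈ range n | p k} ⊆ range s := fun k hk => by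
      simp only [mem_filter, mem_range] at hk ⊢
      by_contra hks
      exact hs ⟨by omega, hp (by omega) hk.1 hk.2⟩
    have := card_le_card hsub
    simp only [card_range] at this
    omega
  · rintro ⟨hsn, hps⟩
    have hsub : range (s + 1) ⊆ {k ∈ range n | p k} := fun k hk => by
      simp only [mem_filter, mem_range] at hk ⊢
      exact ⟨by omega, hp (by omega) hsn hps⟩
    have := card_le_card hsub
    simp only [card_range] at this
    omega

theorem card_filter_range_lt {n m : ℕ} (h : m ≤ n) : #{k ∈ range n | k < m} = m := by
  rw [show {k ∈ range n | k < m} = range m by ext; simp only [mem_filter, mem_range]; omega,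
    card_range]

theorem colHeight_cons (a : ℕ) (l : List ℕ) (j : ℕ) :
    colHeight (a :: l) j = colHeight l j + if j < a then 1 else 0 := by
  by_cases h : j < a <;> simp [colHeight, h]

theorem colHeight_antitone (l : List ℕ) : Antitone (colHeight l) := by
  intro j j' hjj'
  induction l with
  | nil => simp [colHeight]
  | cons a l ih =>
    simp only [colHeight_cons]
    split_ifs <;> omega

theorem antitone_colHeight_add (l m : List ℕ) : Antitone (colHeight l + colHeight m) :=
  (colHeight_antitone l).add (colHeight_antitone m)

theorem colHeight_le_length (l : List ℕ) (j : ℕ) : colHeight l j ≤ l.length :=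
  List.length_filter_le _ _

theorem colHeight_map_range (R : ℕ) (f : ℕ → ℕ) (j : ℕ) :
    colHeight ((List.range R).map f) j = #{i ∈ range R | j < f i} := by
  rw [colHeight, List.filter_map, List.length_map]
  exact length_filter_range R _

theorem colHeight_replicate_zero (R j : ℕ) : colHeight (List.replicate R 0) j = 0 := by
  simp [colHeight]

theorem colHeight_modify {l : List ℕ} {t : ℕ} (ht : t < l.length) :
    colHeight (l.modify t (· + 1)) = colHeight l + Pi.single l[t] 1 := by
  induction l generalizing t with
  | nil => simp at ht
  | cons a l ih =>
    funext j
    cases t with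
    | zero =>
      simp only [List.modify_zero_cons, colHeight_cons, Pi.add_apply, Pi.single_apply,
        List.getElem_cons_zero]
      split_ifs <;> omega
    | succ t =>
      simp only [List.modify_succ_cons, colHeight_cons, List.getElem_cons_succ,
        ih (Nat.lt_of_succ_lt_succ ht), Pi.add_apply]
      omega

theorem AddsCell.colHeight_le {l m : List ℕ} (h : AddsCell l m) (j : ℕ) :
    colHeight l j ≤ colHeight m j := by
  obtain ⟨i, hi, rfl⟩ := h
  simp [colHeight_modify hi]

theorem IsPartitionIn.of_addsCell {R c : ℕ} {l m : List ℕ} (h : AddsCell l m)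
    (hl : l.SortedGE) (hm : IsPartitionIn R c m) : IsPartitionIn R c l := by
  obtain ⟨t, ht, rfl⟩ := h
  refine ⟨by simpa using hm.length_eq, hl, fun a ha => ?_⟩
  obtain ⟨i, hi, rfl⟩ := List.getElem_of_mem ha
  have hle := hm.le_of_mem _ (List.getElem_mem (l := l.modify t (· + 1)) (by simpa using hi))
  rw [List.getElem_modify] at hle
  split_ifs at hle <;> omega

def ofColHeights (R c : ℕ) (H : ℕ → ℕ) : List ℕ :=
  (List.range R).map fun i => #{j ∈ range c | i < H j}

theorem vsum_eq_ofColHeights (R c : ℕ) (l m : List ℕ) :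
    vsum R c l m = ofColHeights R c (colHeight l + colHeight m) :=
  List.map_congr_left fun _ _ => length_filter_range c _

@[simp]
theorem length_ofColHeights (R c : ℕ) (H : ℕ → ℕ) : (ofColHeights R c H).length = R := by
  simp [ofColHeights]

@[simp]
theorem getElem_ofColHeights {R c : ℕ} {H : ℕ → ℕ} {i : ℕ}
    (h : i < (ofColHeights R c H).length) :
    (ofColHeights R c H)[i] = #{j ∈ range c | i < H j} := by
  simp [ofColHeights]

theorem ofColHeights_congr {R c : ℕ} {H H' : ℕ → ℕ} (h : ∀ j < c, H j = H' j) :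
    ofColHeights R c H = ofColHeights R c H' :=
  List.map_congr_left fun i _ => congrArg card <| filter_congr fun j hj => by
    rw [h j (mem_range.mp hj)]

theorem isPartitionIn_ofColHeights (R c : ℕ) (H : ℕ → ℕ) :
    IsPartitionIn R c (ofColHeights R c H) := by
  refine ⟨by simp, sortedGE_map_range fun i _ i' _ hii' => ?_, fun a ha => ?_⟩
  · exact card_le_card fun j hj => by
      simp only [mem_filter] at hj ⊢
      exact ⟨hj.1, by omega⟩
  · obtain ⟨i, -, rfl⟩ := List.mem_map.mp ha
    exact (card_filter_le _ _).trans (card_range c).le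

theorem colHeight_ofColHeights {R c : ℕ} {H : ℕ → ℕ} (hH : Antitone H) {j : ℕ} (hj : j < c)
    (hR : H j ≤ R) : colHeight (ofColHeights R c H) j = H j := by
  rw [ofColHeights, colHeight_map_range, ← card_filter_range_lt hR]
  congr 1
  refine filter_congr fun i _ => ?_
  rw [lt_card_filter_range_iff fun k k' hkk' _ hk' => hk'.trans_le (hH hkk')]
  exact and_iff_right hj

theorem ofColHeights_colHeight {R c : ℕ} {l : List ℕ} (hl : IsPartitionIn R c l) :
    ofColHeights R c (colHeight l) = l := by
  refine List.ext_getElem (by simp [hl.length_eq]) fun i hi hil => ?_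
  have hcol : ∀ j, colHeight l j = #{i' ∈ range l.length | j < l.getD i' 0} := fun j => by
    conv_lhs => rw [← map_range_getD l]
    exact colHeight_map_range _ _ _
  have hanti := antitone_getD_of_sortedGE hl.sortedGE
  simp only [getElem_ofColHeights, hcol]
  rw [← card_filter_range_lt (hl.le_of_mem _ (List.getElem_mem hil))]
  congr 1
  refine filter_congr fun j _ => ?_
  rw [lt_card_filter_range_iff fun k k' hkk' _ hk' => hk'.trans_le (hanti hkk'),
    List.getD_eq_getElem _ _ hil]
  exact and_iff_right hil

theorem ofColHeights_add_single {R c : ℕ} {H : ℕ → ℕ} {j : ℕ} (hj : j < c) :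
    ofColHeights R c (H + Pi.single j 1) = (ofColHeights R c H).modify (H j) (· + 1) := by
  refine List.ext_getElem (by simp) fun i _ hi => ?_
  simp only [List.getElem_modify, getElem_ofColHeights, Pi.add_apply, Pi.single_apply]
  split_ifs with hji
  · rw [← card_insert_of_notMem (s := {j' ∈ range c | i < H j'}) (a := j) (by simp [hji])]
    congr 1
    ext j'
    simp only [mem_filter, mem_range, mem_insert]
    by_cases hj' : j' = j
    · simp [hj', hj, hji]
    · simp [hj']
  · congr 1
    refine filter_congr fun j' _ => ?_
    by_cases hj' : j' = j
    · simp only [hj', if_true]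
      omega
    · simp [hj']

theorem modify_perm_cons_eraseIdx {α : Type*} {l : List α} {n : ℕ} (h : n < l.length)
    (f : α → α) : List.Perm (l.modify n f) (f l[n] :: l.eraseIdx n) := by
  have : Inhabited α := ⟨l[n]⟩
  simpa [List.modify_eq_set, h] using List.set_perm_cons_eraseIdx h (f l[n])

theorem modify_perm_modify {α : Type*} {l : List α} {a b : ℕ} (ha : a < l.length)
    (hb : b < l.length) (h : l[a] = l[b]) (f : α → α) :
    List.Perm (l.modify a f) (l.modify b f) := by
  have herase : List.Perm (l.eraseIdx a) (l.eraseIdx b) := by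
    have := (List.getElem_cons_eraseIdx_perm ha).trans (List.getElem_cons_eraseIdx_perm hb).symm
    rw [h] at this
    exact this.cons_inv
  refine (modify_perm_cons_eraseIdx ha f).trans ?_
  rw [h]
  exact (herase.cons _).trans (modify_perm_cons_eraseIdx hb f).symm

theorem ruleSeq_modify {lam ka : List ℕ} (hlen : ka.length = lam.length) (i : ℕ) :
    ruleSeq lam (lam.modify i (· + 1)) ka = ka.modify i (· + 1) := by
  refine List.ext_getElem (by simp [ruleSeq, hlen]) fun k _ _ => ?_
  simp only [ruleSeq, List.getElem_zipWith, List.getElem_modify]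
  split_ifs <;> omega

theorem localRule_modify_eq_of_perm {lam ka mu : List ℕ} (hlen : ka.length = lam.length)
    {i : ℕ} (hmu : mu.SortedGE) (hperm : List.Perm mu (ka.modify i (· + 1))) :
    localRule lam (lam.modify i (· + 1)) ka = mu := by
  rw [localRule, sortDesc, ruleSeq_modify hlen]
  exact List.Perm.eq_of_sortedGE List.sortedGE_insertionSort hmu
    ((List.perm_insertionSort _ _).trans hperm.symm)

theorem getElem_eq_of_not_sortedGE_modify {ka : List ℕ} {i₁ i₂ : ℕ} (hi₁ : i₁ < ka.length)
    (hi₂ : i₂ < ka.length) (hka : ka.SortedGE)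
    (hnu : ((ka.modify i₂ (· + 1)).modify i₁ (· + 1)).SortedGE)
    (hmu : ¬(ka.modify i₁ (· + 1)).SortedGE) : ka[i₂] = ka[i₁] := by
  rw [List.sortedGE_iff_getElem_ge_getElem_of_le] at hmu
  push Not at hmu
  obtain ⟨i, j, hi, hj, hji, hlt⟩ := hmu
  simp only [List.length_modify] at hi hj
  have hka_ij : ka[i] ≤ ka[j] := hka.getElem_ge_getElem_of_le hji
  simp only [List.getElem_modify] at hlt
  obtain ⟨rfl, hj₁, hval⟩ : i = i₁ ∧ j ≠ i₁ ∧ ka[j] = ka[i₁] := by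
    split_ifs at hlt with h1 h2 <;> subst_vars <;> omega
  have hnu_ij :=
    hnu.getElem_ge_getElem_of_le (hi := by simpa using hi) (hj := by simpa using hj) hji
  simp only [List.getElem_modify, if_neg hj₁.symm] at hnu_ij
  split_ifs at hnu_ij with h1 h2 <;> subst_vars <;> omega

theorem localRule_addsCell {R c : ℕ} {ka lam nu : List ℕ} (hka : ka.SortedGE)
    (hlam : IsPartitionIn R c lam) (hnu : IsPartitionIn R c nu)
    (hkl : AddsCell ka lam) (hln : AddsCell lam nu) :
    IsPartitionIn R c (localRule lam nu ka) ∧ AddsCell ka (localRule lam nu ka) ∧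
      AddsCell (localRule lam nu ka) nu := by
  obtain ⟨i₂, hi₂, rfl⟩ := hkl
  obtain ⟨i₁, hi₁, rfl⟩ := hln
  rw [List.length_modify] at hi₁
  have hlen : ka.length = (ka.modify i₂ (· + 1)).length := (List.length_modify _ _ _).symm
  by_cases hmu : (ka.modify i₁ (· + 1)).SortedGE
  · have hcomm : (ka.modify i₂ (· + 1)).modify i₁ (· + 1)
        = (ka.modify i₁ (· + 1)).modify i₂ (· + 1) := by
      rcases eq_or_ne i₂ i₁ with rfl | hne
      · rfl
      · exact List.modify_modify_ne _ _ _ hne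
    have hcell : AddsCell (ka.modify i₁ (· + 1)) ((ka.modify i₂ (· + 1)).modify i₁ (· + 1)) :=
      ⟨i₂, by simpa using hi₂, hcomm⟩
    rw [localRule_modify_eq_of_perm hlen hmu (List.Perm.refl _)]
    exact ⟨hnu.of_addsCell hcell hmu, ⟨i₁, hi₁, rfl⟩, hcell⟩
  · have hrow := getElem_eq_of_not_sortedGE_modify hi₁ hi₂ hka hnu.sortedGE hmu
    rw [localRule_modify_eq_of_perm hlen hlam.sortedGE (modify_perm_modify hi₂ hi₁ hrow _)]
    exact ⟨hlam, ⟨i₂, hi₂, rfl⟩, ⟨i₁, by simpa using hi₁, rfl⟩⟩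

theorem localRule_ofColHeights {R c : ℕ} {G : ℕ → ℕ} {j₁ j₂ : ℕ} (hj₁ : j₁ < c) (hj₂ : j₂ < c)
    (hG : Antitone G) (hG' : Antitone (G + Pi.single j₁ 1 + Pi.single j₂ 1))
    (hR : (G + Pi.single j₁ 1 + Pi.single j₂ 1 : ℕ → ℕ) j₁ ≤ R) :
    localRule (ofColHeights R c (G + Pi.single j₂ 1))
        (ofColHeights R c (G + Pi.single j₁ 1 + Pi.single j₂ 1)) (ofColHeights R c G)
      = ofColHeights R c (G + Pi.single j₁ 1) := by
  rw [add_right_comm, ofColHeights_add_single (H := G + Pi.single j₂ 1) hj₁,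
    ofColHeights_add_single hj₂]
  refine localRule_modify_eq_of_perm (by simp) (isPartitionIn_ofColHeights R c _).sortedGE ?_
  rw [ofColHeights_add_single hj₁]
  rcases eq_or_ne j₁ j₂ with rfl | hne
  · -- no column has height `G j₁ + 1`, so rows `G j₁` and `G j₁ + 1` of `ofColHeights G` agree
    simp only [Pi.add_apply, Pi.single_eq_same] at hR ⊢
    refine modify_perm_modify (l := ofColHeights R c G) (by simp; omega) (by simp; omega) ?_ _
    simp only [getElem_ofColHeights]
    congr 1
    refine filter_congr fun j _ => ?_
    have : G j ≠ G j₁ + 1 := by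
      rcases lt_trichotomy j j₁ with h | rfl | h
      · have := hG' h.le
        simp only [Pi.add_apply, Pi.single_apply, h.ne, if_false, if_true] at this
        omega
      · omega
      · have := hG h.le
        omega
    omega
  · simp [hne]

theorem localRule_vsum {R c : ℕ} {q q' a a' : List ℕ} (hq : AddsCell q q') (ha : AddsCell a a')
    (hq'c : ∀ v ∈ q', v ≤ c) (ha'c : ∀ v ∈ a', v ≤ c)
    (hR : ∀ j < c, colHeight q' j + colHeight a' j ≤ R) :
    localRule (vsum R c q a') (vsum R c q' a') (vsum R c q a) = vsum R c q' a := by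
  obtain ⟨t₁, ht₁, rfl⟩ := hq
  obtain ⟨t₂, ht₂, rfl⟩ := ha
  have hj₁ : q[t₁] < c := by
    have := hq'c _ (List.getElem_mem (l := q.modify t₁ (· + 1)) (by simpa using ht₁))
    rw [List.getElem_modify_eq] at this
    omega
  have hj₂ : a[t₂] < c := by
    have := ha'c _ (List.getElem_mem (l := a.modify t₂ (· + 1)) (by simpa using ht₂))
    rw [List.getElem_modify_eq] at this
    omega
  have hG' := antitone_colHeight_add (q.modify t₁ (· + 1)) (a.modify t₂ (· + 1))
  have hR' := hR _ hj₁
  have hsum : colHeight q + Pi.single q[t₁] 1 + (colHeight a + Pi.single a[t₂] 1)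
      = colHeight q + colHeight a + Pi.single q[t₁] 1 + Pi.single a[t₂] 1 := by
    abel
  rw [← Pi.add_apply (colHeight _), colHeight_modify ht₁, colHeight_modify ht₂, hsum] at hR'
  rw [colHeight_modify ht₁, colHeight_modify ht₂, hsum] at hG'
  rw [vsum_eq_ofColHeights, vsum_eq_ofColHeights, vsum_eq_ofColHeights, vsum_eq_ofColHeights,
    colHeight_modify ht₁, colHeight_modify ht₂, hsum, ← add_assoc (colHeight q),
    add_right_comm (colHeight q) (Pi.single q[t₁] 1)]
  exact localRule_ofColHeights hj₁ hj₂ (antitone_colHeight_add q a) hG' hR'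

theorem isPartitionIn_replicate_zero (R c : ℕ) : IsPartitionIn R c (List.replicate R 0) :=
  ⟨List.length_replicate, List.sortedGE_of_getElem_ge_getElem_of_le fun _ _ _ _ _ => by simp,
    fun a ha => by simp [List.eq_of_mem_replicate ha]⟩

def shapeUpTo (R C : ℕ) (T : ℕ → ℕ → ℕ) (x : ℕ) : List ℕ :=
  (List.range R).map fun i => #{j ∈ range C | T i j ≤ x}

namespace IsSYT

variable {R C : ℕ} {T : ℕ → ℕ → ℕ}

theorem mem_Icc (hT : IsSYT R C T) {i j : ℕ} (hi : i < R) (hj : j < C) :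
    T i j ∈ Set.Icc 1 (R * C) :=
  hT.2.2.mapsTo (x := (i, j)) ⟨hi, hj⟩

theorem row_strictMonoOn (hT : IsSYT R C T) {i : ℕ} (hi : i < R) :
    StrictMonoOn (T i) (Set.Iio C) :=
  strictMonoOn_of_lt_succ Set.ordConnected_Iio fun j _ _ hj => by
    simpa using hT.1 i j hi (by simpa using hj)

theorem col_strictMonoOn (hT : IsSYT R C T) {j : ℕ} (hj : j < C) :
    StrictMonoOn (T · j) (Set.Iio R) :=
  strictMonoOn_of_lt_succ Set.ordConnected_Iio fun i _ _ hi => by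
    simpa using hT.2.1 i j (by simpa using hi) hj

theorem isPartitionIn_shapeUpTo (hT : IsSYT R C T) (x : ℕ) :
    IsPartitionIn R C (shapeUpTo R C T x) := by
  refine ⟨by simp [shapeUpTo], sortedGE_map_range fun i _ i' hi' hii' => ?_, fun a ha => ?_⟩
  · refine card_le_card fun j hj => ?_
    simp only [mem_filter, mem_range] at hj ⊢
    exact ⟨hj.1, le_trans ((hT.col_strictMonoOn hj.1).monotoneOn
      (hii'.trans_lt hi') hi' hii') hj.2⟩
  · obtain ⟨i, -, rfl⟩ := List.mem_map.mp ha
    exact (card_filter_le _ _).trans (card_range C).le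

theorem colHeight_shapeUpTo (hT : IsSYT R C T) {j : ℕ} (hj : j < C) (x : ℕ) :
    colHeight (shapeUpTo R C T x) j = #{i ∈ range R | T i j ≤ x} := by
  rw [shapeUpTo, colHeight_map_range]
  refine congrArg card <| filter_congr fun i hi => ?_
  rw [lt_card_filter_range_iff fun k k' hkk' hk' hk'x =>
    le_trans ((hT.row_strictMonoOn (mem_range.mp hi)).monotoneOn (hkk'.trans_lt hk') hk' hkk')
      hk'x]
  exact and_iff_right hj

theorem addsCell_shapeUpTo (hT : IsSYT R C T) {x : ℕ} (hx : x < R * C) :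
    AddsCell (shapeUpTo R C T x) (shapeUpTo R C T (x + 1)) := by
  obtain ⟨⟨i₀, j₀⟩, ⟨hi₀, hj₀⟩, hv⟩ :=
    hT.2.2.surjOn (show x + 1 ∈ Set.Icc 1 (R * C) from ⟨by omega, by omega⟩)
  have huniq : ∀ i j, i < R → j < C → T i j = x + 1 → i = i₀ ∧ j = j₀ := fun i j hi hj h =>
    Prod.ext_iff.mp (hT.2.2.injOn (x₁ := (i, j)) ⟨hi, hj⟩ ⟨hi₀, hj₀⟩ (h.trans hv.symm))
  refine ⟨i₀, by simpa [shapeUpTo] using hi₀,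
    List.ext_getElem (by simp [shapeUpTo]) fun i hi _ => ?_⟩
  simp only [shapeUpTo, List.length_map, List.length_range] at hi
  simp only [shapeUpTo, List.getElem_modify, List.getElem_map, List.getElem_range]
  split_ifs with h
  · subst h
    rw [← card_insert_of_notMem (s := {j ∈ range C | T i₀ j ≤ x}) (a := j₀) (by simp [hv])]
    congr 1
    ext j
    simp only [mem_filter, mem_range, mem_insert]
    constructor
    · rintro ⟨hj, hjx⟩
      by_cases hjx' : T i₀ j = x + 1
      · exact Or.inl (huniq _ _ hi hj hjx').2
      · exact Or.inr ⟨hj, by omega⟩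
    · rintro (rfl | ⟨hj, hjx⟩)
      · exact ⟨hj₀, hv.le⟩
      · exact ⟨hj, by omega⟩
  · refine congrArg card <| filter_congr fun j hj => ?_
    have : T i j ≠ x + 1 := fun h' => h (huniq _ _ hi (mem_range.mp hj) h').1.symm
    omega

theorem shapeUpTo_zero (hT : IsSYT R C T) : shapeUpTo R C T 0 = List.replicate R 0 := by
  refine List.ext_getElem (by simp [shapeUpTo]) fun i hi _ => ?_
  simp only [shapeUpTo, List.length_map, List.length_range] at hi
  simp only [shapeUpTo, List.getElem_map, List.getElem_range, List.getElem_replicate,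
    card_eq_zero, filter_eq_empty_iff, mem_range]
  exact fun j hj => by have := (hT.mem_Icc hi hj).1; omega

theorem bijOn_stack {r c : ℕ} {P Q : ℕ → ℕ → ℕ} (hP : IsSYT r c P) (hQ : IsSYT r c Q) :
    Set.BijOn (fun p : ℕ × ℕ => PromRS.stack r c P Q p.1 p.2)
      {p : ℕ × ℕ | p.1 < 2 * r ∧ p.2 < c} (Set.Icc 1 (2 * r * c)) := by
  have hrc : 2 * r * c = r * c + r * c := by ring
  refine ⟨?_, ?_, ?_⟩
  · rintro ⟨i, j⟩ ⟨hi, hj⟩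
    simp only [PromRS.stack, Set.mem_Icc]
    split_ifs with h
    · have := hP.mem_Icc h hj
      simp only [Set.mem_Icc] at this
      omega
    · have := hQ.mem_Icc (i := i - r) (by omega) hj
      simp only [Set.mem_Icc] at this
      omega
  · rintro ⟨i, j⟩ ⟨hi, hj⟩ ⟨i', j'⟩ ⟨hi', hj'⟩ h
    simp only [PromRS.stack] at h hi hi' hj hj' ⊢
    split_ifs at h with h₁ h₂ h₂
    · exact hP.2.2.injOn (x₁ := (i, j)) ⟨h₁, hj⟩ ⟨h₂, hj'⟩ h
    · have := (hP.mem_Icc h₁ hj).2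
      have := (hQ.mem_Icc (i := i' - r) (by omega) hj').1
      omega
    · have := (hP.mem_Icc h₂ hj').2
      have := (hQ.mem_Icc (i := i - r) (by omega) hj).1
      omega
    · have := hQ.2.2.injOn (x₁ := (i - r, j)) (x₂ := (i' - r, j')) ⟨by omega, hj⟩ ⟨by omega, hj'⟩
        (by simpa using h)
      simp only [Prod.mk.injEq] at this ⊢
      omega
  · intro v ⟨hv₁, hv₂⟩
    by_cases hv : v ≤ r * c
    · obtain ⟨⟨i, j⟩, ⟨hi, hj⟩, h⟩ := hP.2.2.surjOn (show v ∈ Set.Icc 1 (r * c) from ⟨hv₁, hv⟩)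
      exact ⟨(i, j), ⟨by simp only at hi ⊢; omega, hj⟩, by simpa [PromRS.stack, hi] using h⟩
    · obtain ⟨⟨i, j⟩, ⟨hi, hj⟩, h⟩ :=
        hQ.2.2.surjOn (show v - r * c ∈ Set.Icc 1 (r * c) from ⟨by omega, by omega⟩)
      refine ⟨(i + r, j), ⟨by simp only at hi ⊢; omega, hj⟩, ?_⟩
      simp only [PromRS.stack, if_neg (show ¬ i + r < r by omega), Nat.add_sub_cancel] at h ⊢
      omega

theorem stack {r c : ℕ} {P Q : ℕ → ℕ → ℕ} (hP : IsSYT r c P) (hQ : IsSYT r c Q) :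
    IsSYT (2 * r) c (PromRS.stack r c P Q) := by
  refine ⟨fun i j hi hj => ?_, fun i j hi hj => ?_, bijOn_stack hP hQ⟩
  · simp only [PromRS.stack]
    split_ifs with h
    · exact hP.1 i j h hj
    · have := hQ.1 (i - r) j (by omega) hj
      omega
  · simp only [PromRS.stack]
    split_ifs with h₁ h₂ h₂
    · exact hP.2.1 i j h₂ hj
    · have := (hP.mem_Icc h₁ hj).2
      have := (hQ.mem_Icc (i := i + 1 - r) (by omega) hj).1
      omega
    · omega
    · have := hQ.2.1 (i - r) j (by omega) hj
      rw [show i + 1 - r = i - r + 1 by omega]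
      omega

end IsSYT

structure IsTableauChain (R c : ℕ) (f : ℕ → List ℕ) (a b : ℕ) : Prop where
  eq_empty : f a = List.replicate R 0
  isPartitionIn : ∀ x, a ≤ x → x ≤ b → IsPartitionIn R c (f x)
  addsCell : ∀ x, a ≤ x → x < b → AddsCell (f x) (f (x + 1))

theorem IsSYT.isTableauChain_shapeUpTo {R C : ℕ} {T : ℕ → ℕ → ℕ} (hT : IsSYT R C T) :
    IsTableauChain R C (shapeUpTo R C T) 0 (R * C) :=
  ⟨hT.shapeUpTo_zero, fun x _ _ => hT.isPartitionIn_shapeUpTo x,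
    fun _ _ hx => hT.addsCell_shapeUpTo hx⟩

theorem nextRow_self (R : ℕ) (prev : ℕ → List ℕ) (s : ℕ) :
    nextRow R prev s s = List.replicate R 0 := by
  cases s with
  | zero => rfl
  | succ s => exact if_pos le_rfl

theorem nextRow_succ (R : ℕ) (prev : ℕ → List ℕ) {s x : ℕ} (h : s ≤ x) :
    nextRow R prev s (x + 1) = localRule (prev x) (prev (x + 1)) (nextRow R prev s x) :=
  if_neg (by omega)

theorem IsTableauChain.nextRow_spec {R c s N : ℕ} {prev : ℕ → List ℕ}
    (h : IsTableauChain R c prev s N) :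
    IsTableauChain R c (nextRow R prev (s + 1)) (s + 1) N ∧
      ∀ x, s + 1 ≤ x → x ≤ N → AddsCell (nextRow R prev (s + 1) x) (prev x) := by
  have step : ∀ x, s + 1 ≤ x → x < N →
      IsPartitionIn R c (nextRow R prev (s + 1) x) →
      AddsCell (nextRow R prev (s + 1) x) (prev x) →
      IsPartitionIn R c (nextRow R prev (s + 1) (x + 1)) ∧
        AddsCell (nextRow R prev (s + 1) x) (nextRow R prev (s + 1) (x + 1)) ∧
        AddsCell (nextRow R prev (s + 1) (x + 1)) (prev (x + 1)) := by
    intro x hx hxN hpart hcell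
    rw [nextRow_succ R prev (by omega : s + 1 ≤ x)]
    exact localRule_addsCell hpart.sortedGE (h.isPartitionIn x (by omega) hxN.le)
      (h.isPartitionIn (x + 1) (by omega) hxN) hcell (h.addsCell x (by omega) hxN)
  have below : ∀ x, s + 1 ≤ x → x ≤ N →
      IsPartitionIn R c (nextRow R prev (s + 1) x) ∧
        AddsCell (nextRow R prev (s + 1) x) (prev x) := by
    intro x hx hxN
    induction x, hx using Nat.le_induction with
    | base =>
      rw [nextRow_self, ← h.eq_empty]
      exact ⟨h.eq_empty ▸ isPartitionIn_replicate_zero R c, h.addsCell s le_rfl (by omega)⟩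
    | succ x hx ih =>
      obtain ⟨hpart, hcell⟩ := ih (by omega)
      obtain ⟨hpart', -, hcell'⟩ := step x hx (by omega) hpart hcell
      exact ⟨hpart', hcell'⟩
  refine ⟨⟨nextRow_self R prev (s + 1), fun x hx hxN => (below x hx hxN).1, fun x hx hxN => ?_⟩,
    fun x hx hxN => (below x hx hxN).2⟩
  obtain ⟨hpart, hcell⟩ := below x hx hxN.le
  exact (step x hx hxN hpart hcell).2.1

theorem isTableauChain_PErow {R C N : ℕ} {T : ℕ → ℕ → ℕ}
    (h₀ : IsTableauChain R C (PErow R C T 0) 0 N) (j : ℕ) :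
    IsTableauChain R C (PErow R C T j) j N := by
  induction j with
  | zero => exact h₀
  | succ j ih => exact ih.nextRow_spec.1

theorem addsCell_PErow_succ {R C N : ℕ} {T : ℕ → ℕ → ℕ}
    (h₀ : IsTableauChain R C (PErow R C T 0) 0 N) {j x : ℕ} (hx : j + 1 ≤ x) (hxN : x ≤ N) :
    AddsCell (PErow R C T (j + 1) x) (PErow R C T j x) :=
  (isTableauChain_PErow h₀ j).nextRow_spec.2 x hx hxN

theorem PErow_zero_of_le {R C : ℕ} {T : ℕ → ℕ → ℕ} {x : ℕ} (hx : x ≤ R * C) :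
    PErow R C T 0 x = shapeUpTo R C T x := by
  simp only [PErow, min_eq_left hx, shapeUpTo]

theorem IsSYT.isTableauChain_PErow_zero {R C : ℕ} {T : ℕ → ℕ → ℕ} (hT : IsSYT R C T) :
    IsTableauChain R C (PErow R C T 0) 0 (R * C) := by
  obtain ⟨h0, hpart, hcell⟩ := hT.isTableauChain_shapeUpTo
  refine ⟨by rw [PErow_zero_of_le (Nat.zero_le _), h0], fun x hx hxN => ?_, fun x hx hxN => ?_⟩
  · rw [PErow_zero_of_le hxN]
    exact hpart x hx hxN
  · rw [PErow_zero_of_le hxN.le, PErow_zero_of_le hxN]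
    exact hcell x hx hxN

theorem vsum_congr_left {R c : ℕ} {l l' m : List ℕ}
    (h : ∀ j < c, colHeight l j = colHeight l' j) :
    vsum R c l m = vsum R c l' m := by
  rw [vsum_eq_ofColHeights, vsum_eq_ofColHeights]
  exact ofColHeights_congr fun j hj => congrArg (· + colHeight m j) (h j hj)

theorem vsum_replicate_zero_left {R c : ℕ} {a : List ℕ} (ha : IsPartitionIn R c a) (R' : ℕ) :
    vsum R c (List.replicate R' 0) a = a := by
  rw [vsum_eq_ofColHeights]
  convert ofColHeights_colHeight ha using 2
  funext j
  simp [colHeight_replicate_zero]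

section lamBlock

variable {r c : ℕ} {S : ℕ → ℕ → ℕ}

theorem lamBlock_succ_left {x y : ℕ} (hy : y < r * c) :
    lamBlock r c S (x + 1) y
      = localRule (lamBlock r c S x (y + 1)) (lamBlock r c S (x + 1) (y + 1))
          (lamBlock r c S x y) := by
  simp only [lamBlock]
  rw [show r * c - y = r * c - (y + 1) + 1 by omega]
  exact nextRow_succ (x := r * c + x) _ _ (by omega)

theorem lamBlock_top (x : ℕ) : lamBlock r c S x (r * c) = PErow (2 * r) c S 0 (r * c + x) := by
  simp [lamBlock]

theorem isPartitionIn_lamBlock (hS : IsSYT (2 * r) c S) {x y : ℕ} (hx : x ≤ r * c)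
    (hy : y ≤ r * c) : IsPartitionIn (2 * r) c (lamBlock r c S x y) :=
  (isTableauChain_PErow hS.isTableauChain_PErow_zero _).isPartitionIn _ (by omega)
    (by rw [mul_assoc, two_mul]; omega)

theorem addsCell_lamBlock_succ_right (hS : IsSYT (2 * r) c S) {x y : ℕ} (hx : x ≤ r * c)
    (hy : y < r * c) :
    AddsCell (lamBlock r c S x y) (lamBlock r c S x (y + 1)) := by
  have := addsCell_PErow_succ hS.isTableauChain_PErow_zero
    (show r * c - (y + 1) + 1 ≤ r * c + x by omega) (by rw [mul_assoc, two_mul]; omega)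
  rwa [show r * c - (y + 1) + 1 = r * c - y by omega] at this

theorem lamBlock_zero_zero (hS : IsSYT (2 * r) c S) :
    lamBlock r c S 0 0 = List.replicate (2 * r) 0 :=
  (isTableauChain_PErow hS.isTableauChain_PErow_zero (r * c)).eq_empty

end lamBlock

section stack

variable {r c : ℕ} {P Q : ℕ → ℕ → ℕ}

theorem card_filter_stack_le (hP : IsSYT r c P) {j : ℕ} (hj : j < c) (x : ℕ) :
    #{i ∈ range (2 * r) | stack r c P Q i j ≤ r * c + x} = r + #{i ∈ range r | Q i j ≤ x} := by
  rw [two_mul, card_filter, sum_range_add, card_filter]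
  congr 1
  · rw [sum_congr rfl fun i hi => if_pos ?_]
    · simp
    · have := (hP.mem_Icc (mem_range.mp hi) hj).2
      simp only [stack, if_pos (mem_range.mp hi)]
      omega
  · refine sum_congr rfl fun i _ => ?_
    simp only [stack, if_neg (show ¬r + i < r by omega), Nat.add_sub_cancel_left]
    split_ifs <;> omega

theorem colHeight_lamBlock_zero_top (hP : IsSYT r c P) (hQ : IsSYT r c Q) {j : ℕ} (hj : j < c) :
    colHeight (lamBlock r c (stack r c P Q) 0 (r * c)) j = r := by
  rw [lamBlock_top, PErow_zero_of_le (by rw [mul_assoc, two_mul]; omega),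
    (hP.stack hQ).colHeight_shapeUpTo hj, card_filter_stack_le hP hj, ← hQ.colHeight_shapeUpTo hj,
    hQ.shapeUpTo_zero, colHeight_replicate_zero, add_zero]

theorem lamBlock_top_eq_vsum (hP : IsSYT r c P) (hQ : IsSYT r c Q) {x : ℕ} (hx : x ≤ r * c) :
    lamBlock r c (stack r c P Q) x (r * c)
      = vsum (2 * r) c (shapeUpTo r c Q x) (lamBlock r c (stack r c P Q) 0 (r * c)) := by
  have hS := hP.stack hQ
  rw [vsum_eq_ofColHeights, lamBlock_top, PErow_zero_of_le (by rw [mul_assoc, two_mul]; omega),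
    ← ofColHeights_colHeight (hS.isPartitionIn_shapeUpTo _)]
  refine ofColHeights_congr fun j hj => ?_
  rw [Pi.add_apply, colHeight_lamBlock_zero_top hP hQ hj, hS.colHeight_shapeUpTo hj,
    hQ.colHeight_shapeUpTo hj, card_filter_stack_le hP hj, add_comm]

theorem colHeight_lamBlock_zero_left_le (hP : IsSYT r c P) (hQ : IsSYT r c Q) {y : ℕ}
    (hy : y ≤ r * c) {j : ℕ} (hj : j < c) :
    colHeight (lamBlock r c (stack r c P Q) 0 y) j ≤ r := by
  induction hy using Nat.decreasingInduction with
  | self => exact (colHeight_lamBlock_zero_top hP hQ hj).le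
  | of_succ y hy ih =>
    exact ((addsCell_lamBlock_succ_right (hP.stack hQ) (Nat.zero_le _) hy).colHeight_le j).trans ih

theorem lamBlock_eq_vsum_shapeUpTo (hP : IsSYT r c P) (hQ : IsSYT r c Q) {x y : ℕ}
    (hx : x ≤ r * c) (hy : y ≤ r * c) :
    lamBlock r c (stack r c P Q) x y
      = vsum (2 * r) c (shapeUpTo r c Q x) (lamBlock r c (stack r c P Q) 0 y) := by
  have hS := hP.stack hQ
  induction x generalizing y with
  | zero =>
    rw [hQ.shapeUpTo_zero,
      vsum_replicate_zero_left (isPartitionIn_lamBlock hS (Nat.zero_le _) hy)]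
  | succ x ih =>
    induction hy using Nat.decreasingInduction with
    | self => exact lamBlock_top_eq_vsum hP hQ hx
    | of_succ y hy ihy =>
      rw [lamBlock_succ_left hy, ih (by omega) hy.le, ih (by omega) hy, ihy]
      refine localRule_vsum (hQ.addsCell_shapeUpTo (by omega))
        (addsCell_lamBlock_succ_right hS (Nat.zero_le _) hy)
        (hQ.isPartitionIn_shapeUpTo _).le_of_mem
        (isPartitionIn_lamBlock hS (Nat.zero_le _) hy).le_of_mem fun j hj => ?_
      have h₁ := colHeight_le_length (shapeUpTo r c Q (x + 1)) j
      have h₂ := colHeight_lamBlock_zero_left_le hP hQ hy hj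
      rw [(hQ.isPartitionIn_shapeUpTo _).length_eq] at h₁
      omega

theorem colHeight_lamBlock_zero_right (hP : IsSYT r c P) (hQ : IsSYT r c Q) {x : ℕ}
    (hx : x ≤ r * c) {j : ℕ} (hj : j < c) :
    colHeight (lamBlock r c (stack r c P Q) x 0) j = colHeight (shapeUpTo r c Q x) j := by
  have hlen := colHeight_le_length (shapeUpTo r c Q x) j
  rw [(hQ.isPartitionIn_shapeUpTo _).length_eq] at hlen
  rw [lamBlock_eq_vsum_shapeUpTo hP hQ hx (Nat.zero_le _), lamBlock_zero_zero (hP.stack hQ),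
    vsum_eq_ofColHeights, colHeight_ofColHeights (antitone_colHeight_add _ _) hj]
  · simp only [Pi.add_apply, colHeight_replicate_zero, add_zero]
  · simp only [Pi.add_apply, colHeight_replicate_zero, add_zero]
    omega

end stack

/-- For `P, Q ∈ SYT(r × c)`, `n = rc`, `S = stack(P, Q)`, and the
`(n+1) × (n+1)` northeast block of partitions `λ(x, y)` of `PEdiagram(S)`: for all
`0 ≤ x, y ≤ n` we have `λ(x, y) = λ(x, 0) +' λ(0, y)`, the vertical sum of partitions. -/
theorem lamBlock_eq_vsum (r c : ℕ) (P Q : ℕ → ℕ → ℕ)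
    (hP : IsSYT r c P) (hQ : IsSYT r c Q) :
    ∀ x ≤ r * c, ∀ y ≤ r * c, ∀ i : ℕ,
      (lamBlock r c (stack r c P Q) x y).getD i 0 =
        (vsum (2 * r) c (lamBlock r c (stack r c P Q) x 0)
          (lamBlock r c (stack r c P Q) 0 y)).getD i 0 := by
  intro x hx y hy i
  rw [lamBlock_eq_vsum_shapeUpTo hP hQ hx hy,
    vsum_congr_left fun j hj => colHeight_lamBlock_zero_right hP hQ hx hj]

end PromRS
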